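/- arXiv:1001.0207 — 4 statements merged into one kernel-verified Lean document; each statement's English description precedes it below -/
import Mathlib

section
/- Let k ≥ 2 and let (a_1, ..., a_k) be a k-tuple of positive integers with gcd(a_1, ..., a_k) = 1, and let j ≥ 0. If f_j(a_1, ..., a_k) is nonzero, then there exist positive integers x_2, ..., x_k such that f_j(a_1, ..., a_k) = Σ_{i=2}^k a_i x_i; that is, f_j(a_1, ..., a_k) admits a representation in which the coefficient of a_1 is zero and all remaining coefficients are strictly positive. -/
/-- The number of positive representations of `M` by the tuple `a`, i.e. the number of
tuples `x` of positive integers with `M = ∑ i, a i * x i`. -/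
noncomputable def posRepCount {k : ℕ} (a : Fin k → ℕ) (M : ℕ) : ℕ :=
  Nat.card {x : Fin k → ℕ // (∀ i, 0 < x i) ∧ ∑ i, a i * x i = M}

/-- `fFrob a j` is the greatest integer with exactly `j` positive representations
by `a` if such an integer exists, and `0` otherwise. -/
noncomputable def fFrob {k : ℕ} (a : Fin k → ℕ) (j : ℕ) : ℕ :=
  sSup {M : ℕ | posRepCount a M = j}

/-!
Let `F = f_j(a)`, which is the largest integer with exactly `j` positive representations.
Adding `1` to the first coefficient maps the positive representations of `F` bijectively onto
the positive representations of `F + a₁` whose first coefficient is at least `2`. Since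
`F + a₁ > F` has a number of positive representations different from `j`, some positive
representation of `F + a₁` has first coefficient exactly `1`; removing that `a₁` represents `F`
as required.
-/

theorem Nat.isGreatest_sSup_of_ne_zero {s : Set ℕ} (h : sSup s ≠ 0) : IsGreatest s (sSup s) := by
  have hbdd : BddAbove s := by
    by_contra hs
    exact h (Nat.sSup_of_not_bddAbove hs)
  have hne : s.Nonempty := by
    by_contra hs
    exact h (by rw [Set.not_nonempty_iff_eq_empty.mp hs, csSup_empty]; rfl)
  exact ⟨Nat.sSup_mem hne hbdd, fun _ hm => le_csSup hbdd hm⟩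

theorem isGreatest_fFrob {k : ℕ} {a : Fin k → ℕ} {j : ℕ} (h : fFrob a j ≠ 0) :
    IsGreatest {M | posRepCount a M = j} (fFrob a j) :=
  Nat.isGreatest_sSup_of_ne_zero h

theorem sum_mul_add_single {ι R : Type*} [Fintype ι] [DecidableEq ι] [CommSemiring R]
    (a x : ι → R) (i₀ : ι) (c : R) :
    ∑ i, a i * (x + Pi.single i₀ c : ι → R) i = ∑ i, a i * x i + a i₀ * c := by
  simp only [Pi.add_apply, mul_add, Finset.sum_add_distrib, Pi.single_apply, mul_ite, mul_zero,
    Finset.sum_ite_eq', Finset.mem_univ, if_true]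

theorem Pi.single_one_le_of_forall_pos {ι : Type*} [DecidableEq ι] {y : ι → ℕ}
    (hy : ∀ i, 0 < y i) (i₀ : ι) : Pi.single i₀ 1 ≤ y := fun i => by
  rw [Pi.single_apply]
  split_ifs
  exacts [hy i, Nat.zero_le _]

/-- The bijection is `x ↦ x + Pi.single i₀ 1`. -/
theorem posRepCount_add_eq_of_forall_ne_one {k : ℕ} (a : Fin k → ℕ) (M : ℕ) (i₀ : Fin k)
    (h : ∀ y : Fin k → ℕ, (∀ i, 0 < y i) → ∑ i, a i * y i = M + a i₀ → y i₀ ≠ 1) :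
    posRepCount a (M + a i₀) = posRepCount a M := by
  refine (Nat.card_congr
    (α := {x : Fin k → ℕ // (∀ i, 0 < x i) ∧ ∑ i, a i * x i = M})
    (β := {y : Fin k → ℕ // (∀ i, 0 < y i) ∧ ∑ i, a i * y i = M + a i₀})
    { toFun := fun x => ⟨x.1 + Pi.single i₀ 1, fun i => ?_, ?_⟩
      invFun := fun y => ⟨y.1 - Pi.single i₀ 1, fun i => ?_, ?_⟩
      left_inv := fun x => Subtype.ext (add_tsub_cancel_right _ _)
      right_inv := fun y =>
        Subtype.ext (tsub_add_cancel_of_le (Pi.single_one_le_of_forall_pos y.2.1 i₀)) }).symm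
  · exact Nat.add_pos_left (x.2.1 i) _
  · rw [sum_mul_add_single, x.2.2, mul_one]
  · have hy := y.2.1 i
    have hy₀ := h y.1 y.2.1 y.2.2
    rcases eq_or_ne i i₀ with rfl | hi
    · simp only [Pi.sub_apply, Pi.single_eq_same]
      omega
    · simpa [Pi.single_eq_of_ne hi] using hy
  · have hsum := sum_mul_add_single a (y.1 - Pi.single i₀ 1) i₀ 1
    rw [tsub_add_cancel_of_le (Pi.single_one_le_of_forall_pos y.2.1 i₀), y.2.2, mul_one] at hsum
    omega

theorem fFrob_rep_without_first_general (n : ℕ) (a : Fin (n + 2) → ℕ) (ha : ∀ i, 0 < a i)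
    (j : ℕ) (hne : fFrob a j ≠ 0) :
    ∃ x : Fin (n + 2) → ℕ, (∀ i, i ≠ 0 → 0 < x i) ∧
      fFrob a j = ∑ i ∈ Finset.univ.erase 0, a i * x i := by
  obtain ⟨hF, hmax⟩ := isGreatest_fFrob hne
  have hnext : posRepCount a (fFrob a j + a 0) ≠ j := fun h => by
    have := hmax h
    have := ha 0
    omega
  by_contra! hcon
  refine hnext ((posRepCount_add_eq_of_forall_ne_one a _ 0 ?_).trans hF)
  intro y hy hsum hy₀
  rw [← Finset.add_sum_erase _ _ (Finset.mem_univ 0), hy₀, mul_one] at hsum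
  exact hcon y (fun i _ => hy i) (by omega)

/-- Lemma 2: if `f_j(a_1, …, a_k)` is nonzero, it admits a representation with
coefficient of `a_1` equal to zero and all remaining coefficients positive. -/
theorem fFrob_rep_without_first (n : ℕ) (a : Fin (n + 2) → ℕ) (ha : ∀ i, 0 < a i)
    (hgcd : Finset.univ.gcd a = 1) (j : ℕ) (hne : fFrob a j ≠ 0) :
    ∃ x : Fin (n + 2) → ℕ, (∀ i, i ≠ 0 → 0 < x i) ∧
      fFrob a j = ∑ i ∈ Finset.univ.erase 0, a i * x i :=
  fFrob_rep_without_first_general n a ha j hne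
end

section
/- Let k ≥ 2, let (a_1, ..., a_k) be a k-tuple of positive integers with gcd(a_1, ..., a_k) = 1, let d = gcd(a_2, ..., a_k), and let j ≥ 0. Then f_j(a_1, a_2, ..., a_k) = d·f_j(a_1, a_2/d, ..., a_k/d). -/
theorem Nat.sSup_eq_mul_sSup {S T : Set ℕ} {d : ℕ} (hd : 0 < d)
    (hT : ∀ N ∈ T, d * N ∈ S) (hS : ∀ M ∈ S, ∃ N ∈ T, M ≤ d * N) :
    sSup S = d * sSup T := by
  by_cases hbdd : BddAbove T
  · rcases T.eq_empty_or_nonempty with rfl | hne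
    · have : S = ∅ := Set.eq_empty_of_forall_notMem fun M hM ↦ by simpa using hS M hM
      simp [this]
    · refine IsGreatest.csSup_eq ⟨hT _ (Nat.sSup_mem hne hbdd), fun M hM ↦ ?_⟩
      obtain ⟨N, hN, hMN⟩ := hS M hM
      exact hMN.trans (Nat.mul_le_mul_left d (le_csSup hbdd hN))
  · have hbddS : ¬BddAbove S := fun ⟨c, hc⟩ ↦
      hbdd ⟨c, fun N hN ↦ (Nat.le_mul_of_pos_left N hd).trans (hc (hT N hN))⟩
    rw [Nat.sSup_of_not_bddAbove hbdd, Nat.sSup_of_not_bddAbove hbddS, mul_zero]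

theorem Nat.exists_lt_dvd_add_mul {c d : ℕ} (hcop : c.Coprime d) (hd : 0 < d) (M : ℕ) :
    ∃ r < d, d ∣ M + c * r := by
  have : NeZero d := ⟨hd.ne'⟩
  refine ⟨(-(M : ZMod d) * (c : ZMod d)⁻¹).val, ZMod.val_lt _, ?_⟩
  rw [← ZMod.natCast_eq_zero_iff]
  push_cast
  rw [ZMod.natCast_val, ZMod.cast_id]
  linear_combination (-(M : ZMod d)) * ZMod.coe_mul_inv_eq_one _ hcop

def IsPosRep {k : ℕ} (a : Fin k → ℕ) (M : ℕ) (x : Fin k → ℕ) : Prop :=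
  (∀ i, 0 < x i) ∧ ∑ i, a i * x i = M

def divTail {k : ℕ} (a : Fin (k + 1) → ℕ) (d : ℕ) : Fin (k + 1) → ℕ :=
  fun i => if i = 0 then a i else a i / d

section
variable {k : ℕ} {a : Fin (k + 1) → ℕ} {d : ℕ}

theorem sum_add_eq_mul_sum_divTail (hdvd : ∀ i ≠ 0, d ∣ a i) {r : ℕ} {x y : Fin (k + 1) → ℕ}
    (h0 : x 0 + r = d * y 0) (hsucc : ∀ i : Fin k, x i.succ = y i.succ) :
    ∑ i, a i * x i + a 0 * r = d * ∑ i, divTail a d i * y i := by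
  have hdiv (i : Fin k) : d * (a i.succ / d) = a i.succ :=
    Nat.mul_div_cancel' (hdvd _ i.succ_ne_zero)
  simp only [Fin.sum_univ_succ, divTail, if_pos, Fin.succ_ne_zero, if_false, hsucc, mul_add,
    Finset.mul_sum, ← mul_assoc, hdiv]
  rw [mul_comm d, mul_assoc, ← h0]
  ring

theorem isPosRep_iff_isPosRep_divTail (hdvd : ∀ i ≠ 0, d ∣ a i) {M N r : ℕ} (hr : r < d)
    (hMN : M + a 0 * r = d * N) {x y : Fin (k + 1) → ℕ}
    (h0 : x 0 + r = d * y 0) (hsucc : ∀ i : Fin k, x i.succ = y i.succ) :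
    IsPosRep a M x ↔ IsPosRep (divTail a d) N y := by
  have hpos : 0 < x 0 ↔ 0 < y 0 := by
    constructor
    · intro hx
      exact Nat.pos_of_ne_zero fun hy ↦ by simp [hy] at h0; omega
    · intro hy
      have : d ≤ d * y 0 := Nat.le_mul_of_pos_right d hy
      omega
  have hsum := sum_add_eq_mul_sum_divTail hdvd h0 hsucc
  have hd : 0 < d := by omega
  rw [IsPosRep, IsPosRep, Fin.forall_fin_succ, Fin.forall_fin_succ, hpos]
  refine and_congr (and_congr_right' (forall_congr' fun i ↦ by rw [hsucc]))
    ⟨fun h ↦ ?_, fun h ↦ ?_⟩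
  · exact Nat.eq_of_mul_eq_mul_left hd (by rw [← hsum, h, hMN])
  · rw [h, ← hMN] at hsum
    omega

theorem dvd_head_add_of_sum_eq (hdvd : ∀ i ≠ 0, d ∣ a i) (hcop : (a 0).Coprime d) {M r : ℕ}
    (hM : d ∣ M + a 0 * r) {x : Fin (k + 1) → ℕ} (hx : ∑ i, a i * x i = M) :
    d ∣ x 0 + r := by
  have htail : d ∣ ∑ i : Fin k, a i.succ * x i.succ :=
    Finset.dvd_sum fun i _ ↦ (hdvd _ i.succ_ne_zero).mul_right _
  rw [← hx, Fin.sum_univ_succ, add_right_comm, ← mul_add] at hM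
  exact hcop.symm.dvd_of_dvd_mul_left ((Nat.dvd_add_left htail).mp hM)

theorem posRepCount_eq_posRepCount_divTail (hdvd : ∀ i ≠ 0, d ∣ a i)
    (hcop : (a 0).Coprime d) {M N r : ℕ} (hr : r < d) (hMN : M + a 0 * r = d * N) :
    posRepCount a M = posRepCount (divTail a d) N := by
  have hM : d ∣ M + a 0 * r := ⟨N, hMN⟩
  refine Nat.card_congr
    { toFun := fun x ↦ ⟨Fin.cons ((x.1 0 + r) / d) (Fin.tail x.1), ?_⟩
      invFun := fun y ↦ ⟨Fin.cons (d * y.1 0 - r) (Fin.tail y.1), ?_⟩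
      left_inv := fun x ↦ ?_
      right_inv := fun y ↦ ?_ }
  · refine (isPosRep_iff_isPosRep_divTail hdvd hr hMN (x := x.1)
      (y := Fin.cons ((x.1 0 + r) / d) (Fin.tail x.1)) ?_ fun _ ↦ rfl).mp x.2
    rw [Fin.cons_zero, Nat.mul_div_cancel' (dvd_head_add_of_sum_eq hdvd hcop hM x.2.2)]
  · refine (isPosRep_iff_isPosRep_divTail hdvd hr hMN
      (x := Fin.cons (d * y.1 0 - r) (Fin.tail y.1)) (y := y.1) ?_ fun _ ↦ rfl).mpr y.2
    have : d ≤ d * y.1 0 := Nat.le_mul_of_pos_right d (y.2.1 0)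
    rw [Fin.cons_zero]
    omega
  · have := Nat.mul_div_cancel' (dvd_head_add_of_sum_eq hdvd hcop hM x.2.2)
    ext1
    simp only [Fin.cons_zero, Fin.tail_cons, this, Nat.add_sub_cancel, Fin.cons_self_tail]
  · have : d ≤ d * y.1 0 := Nat.le_mul_of_pos_right d (y.2.1 0)
    have hd : 0 < d := by omega
    ext1
    simp only [Fin.cons_zero, Fin.tail_cons, Nat.sub_add_cancel (hr.le.trans this),
      Nat.mul_div_cancel_left _ hd, Fin.cons_self_tail]

end

/-- Theorem 3: `f_j(a_1, a_2, …, a_k) = d · f_j(a_1, a_2/d, …, a_k/d)`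
where `d = gcd(a_2, …, a_k)`. -/
theorem fFrob_scaling (n : ℕ) (a : Fin (n + 2) → ℕ) (ha : ∀ i, 0 < a i)
    (hgcd : Finset.univ.gcd a = 1)
    (d : ℕ) (hd : d = (Finset.univ.erase 0).gcd a) (j : ℕ) :
    fFrob a j = d * fFrob (fun i => if i = 0 then a i else a i / d) j := by
  have hdvd : ∀ i ≠ 0, d ∣ a i := fun i hi ↦
    hd ▸ Finset.gcd_dvd (Finset.mem_erase.mpr ⟨hi, Finset.mem_univ i⟩)
  have hd0 : 0 < d := Nat.pos_of_dvd_of_pos (hdvd 1 Fin.zero_lt_one.ne') (ha 1)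
  have hcop : (a 0).Coprime d := by
    rwa [← Finset.insert_erase (Finset.mem_univ 0), Finset.gcd_insert, ← hd] at hgcd
  refine Nat.sSup_eq_mul_sSup hd0 (fun N hN ↦ ?_) (fun M hM ↦ ?_)
  · exact (posRepCount_eq_posRepCount_divTail hdvd hcop hd0 (N := N) (by simp)).trans hN
  · obtain ⟨r, hr, N, hN⟩ := Nat.exists_lt_dvd_add_mul hcop hd0 M
    refine ⟨N, ?_, by omega⟩
    exact (posRepCount_eq_posRepCount_divTail hdvd hcop hr hN).symm.trans hM
end

section
/- Let a_1, a_2 be coprime positive integers, let m be a positive integer, and let j be a nonnegative integer with j < m+1. If g_j(a_1, a_2, m·a_1·a_2) ≠ 0, then g_j(a_1, a_2, m·a_1·a_2) = (j+1)·a_1·a_2 − a_1 − a_2. -/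
/-!
Write `P = a₁a₂` and `r(N)` for the number of representations of `N` by `(a₁, a₂)`. Adding `P` to
`N` adds exactly one representation (the solutions with `x ≥ a₂` are those of `N` shifted, and
exactly one solution has `x < a₂`), while `r(N) ≤ 1` for `N < P`. Together with the Chicken
McNugget theorem this gives `r(N) = j` for `N = (j+1)P - a₁ - a₂` and `r(N) > j` for every larger
`N`. The third generator `c = mP` only adds representations, and since `j ≤ m`, at
`N = (j+1)P - a₁ - a₂` every representation using it leaves the remainder `P - a₁ - a₂`, which
is not representable. So `(j+1)P - a₁ - a₂` is the largest integer with exactly `j`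
representations as soon as some integer has exactly `j`.
-/

/-- The number of representations of `M` by the tuple `a` (nonnegative coefficients). -/
noncomputable def repCount {k : ℕ} (a : Fin k → ℕ) (M : ℕ) : ℕ :=
  Nat.card {x : Fin k → ℕ // ∑ i, a i * x i = M}

/-- The `j`-Frobenius number: the greatest integer with exactly `j` representations
by `a` if such an integer exists, and `0` otherwise. -/
noncomputable def gFrob {k : ℕ} (a : Fin k → ℕ) (j : ℕ) : ℕ :=
  sSup {M : ℕ | repCount a M = j}

open Finset

section General

variable {k : ℕ} {a : Fin k → ℕ}

theorem finite_reps (ha : ∀ i, 0 < a i) (M : ℕ) :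
    Finite {x : Fin k → ℕ // ∑ i, a i * x i = M} := by
  refine Set.Finite.subset (Set.Finite.pi fun _ => Set.finite_Iic M) fun x hx i _ => ?_
  calc x i ≤ a i * x i := Nat.le_mul_of_pos_left _ (ha i)
    _ ≤ ∑ j, a j * x j :=
      single_le_sum (f := fun j => a j * x j) (fun j _ => Nat.zero_le _) (mem_univ i)
    _ = M := hx

theorem sum_snoc_mul_eq_iff {c M : ℕ} (hc : 0 < c) (x : Fin (k + 1) → ℕ) :
    ∑ i, (Fin.snoc a c : Fin (k + 1) → ℕ) i * x i = M ↔
      x (Fin.last k) ∈ range (M / c + 1) ∧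
        ∑ i, a i * Fin.init x i = M - c * x (Fin.last k) := by
  rw [mem_range, Nat.lt_succ_iff, Nat.le_div_iff_mul_le hc, Fin.sum_univ_castSucc,
    mul_comm (x _)]
  simp only [Fin.snoc_castSucc, Fin.snoc_last, Fin.init]
  omega

theorem repCount_snoc (ha : ∀ i, 0 < a i) {c : ℕ} (hc : 0 < c) (M : ℕ) :
    repCount (Fin.snoc a c : Fin (k + 1) → ℕ) M =
      ∑ z ∈ range (M / c + 1), repCount a (M - c * z) := by
  have e : {x : Fin (k + 1) → ℕ // ∑ i, (Fin.snoc a c : Fin (k + 1) → ℕ) i * x i = M} ≃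
      Σ z : range (M / c + 1), {y : Fin k → ℕ // ∑ i, a i * y i = M - c * z} :=
    { toFun := fun x =>
        have hx := (sum_snoc_mul_eq_iff hc x.1).1 x.2
        ⟨⟨x.1 (Fin.last k), hx.1⟩, ⟨Fin.init x.1, hx.2⟩⟩
      invFun := fun p =>
        ⟨Fin.snoc p.2.1 p.1.1, (sum_snoc_mul_eq_iff hc _).2 (by simpa using p.2.2)⟩
      left_inv := fun x => by simp
      right_inv := fun p => Sigma.subtype_ext (Subtype.ext (by simp)) (by simp) }
  have := fun z : range (M / c + 1) => finite_reps ha (M - c * z)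
  rw [repCount, Nat.card_congr e, Nat.card_sigma]
  exact sum_coe_sort (range (M / c + 1)) fun z => repCount a (M - c * z)

theorem repCount_le_repCount_snoc (ha : ∀ i, 0 < a i) {c : ℕ} (hc : 0 < c) (M : ℕ) :
    repCount a M ≤ repCount (Fin.snoc a c : Fin (k + 1) → ℕ) M := by
  rw [repCount_snoc ha hc]
  simpa using single_le_sum (f := fun z => repCount a (M - c * z)) (fun _ _ => Nat.zero_le _)
    (mem_range.2 (Nat.succ_pos (M / c)))

end General

section TwoGenerators

open Nat

variable {a b : ℕ}

theorem Nat.Coprime.eq_of_mul_add_mul_eq (cop : Coprime a b) {x y x' y' : ℕ} (hx : x < b)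
    (hx' : x' < b) (h : a * x + b * y = a * x' + b * y') : x = x' ∧ y = y' := by
  have hmod : a * x ≡ a * x' [MOD b] := by
    simpa [Nat.ModEq, Nat.add_mul_mod_self_left] using congrArg (· % b) h
  obtain rfl : x = x' := (hmod.cancel_left_of_coprime cop.symm).eq_of_lt_of_lt hx hx'
  exact ⟨rfl, Nat.eq_of_mul_eq_mul_left (by omega) (Nat.add_left_cancel h)⟩

theorem Nat.Coprime.exists_mul_add_mul_eq (cop : Coprime a b) {N : ℕ} (h : a * b < N + a + b) :
    ∃ x y, a * x + b * y = N := by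
  have hN : (a - 1) * (b - 1) ≤ N := by
    rcases a with _ | a
    · simp
    rcases b with _ | b
    · simp
    simp only [add_tsub_cancel_right]
    nlinarith
  obtain ⟨x, y, hxy⟩ := exists_add_mul_eq_of_gcd_dvd_of_mul_pred_le a b N (by simp [cop]) hN
  exact ⟨x, y, by linarith⟩

theorem Nat.Coprime.exists_mul_add_mul_eq_of_lt (cop : Coprime a b) (hb : 0 < b) {N : ℕ}
    (h : a * b < N + a + b) : ∃ x y, x < b ∧ a * x + b * y = N := by
  obtain ⟨x, y, hxy⟩ := cop.exists_mul_add_mul_eq h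
  refine ⟨x % b, y + a * (x / b), Nat.mod_lt _ hb, ?_⟩
  rw [← hxy]
  conv_rhs => rw [← Nat.mod_add_div x b]
  ring

theorem Nat.Coprime.not_exists_mul_add_mul_eq (cop : Coprime a b) {N : ℕ}
    (h : N + a + b = a * b) : ¬ ∃ x y, a * x + b * y = N := by
  rintro ⟨x, y, rfl⟩
  exact cop.mul_add_mul_ne_mul (succ_ne_zero x) (succ_ne_zero y) (by linarith)

def repsEquivPairs (a b N : ℕ) :
    {x : Fin 2 → ℕ // ∑ i, ![a, b] i * x i = N} ≃
      {p : ℕ × ℕ // a * p.1 + b * p.2 = N} :=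
  (piFinTwoEquiv fun _ => ℕ).subtypeEquiv fun x => by simp [Fin.sum_univ_two]

theorem repCount_pair (a b N : ℕ) :
    repCount ![a, b] N = Nat.card {p : ℕ × ℕ // a * p.1 + b * p.2 = N} :=
  Nat.card_congr (repsEquivPairs a b N)

theorem finite_pair_reps (ha : 0 < a) (hb : 0 < b) (N : ℕ) :
    Finite {p : ℕ × ℕ // a * p.1 + b * p.2 = N} :=
  have := finite_reps (a := ![a, b]) (Fin.forall_fin_two.2 ⟨ha, hb⟩) N
  Finite.of_equiv _ (repsEquivPairs a b N)

theorem repCount_pair_pos (cop : Coprime a b) (ha : 0 < a) (hb : 0 < b) {N : ℕ}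
    (h : a * b < N + a + b) : 0 < repCount ![a, b] N := by
  obtain ⟨x, y, hxy⟩ := cop.exists_mul_add_mul_eq h
  rw [repCount_pair]
  exact Nat.card_pos_iff.2 ⟨⟨⟨(x, y), hxy⟩⟩, finite_pair_reps ha hb N⟩

theorem repCount_pair_eq_zero (cop : Coprime a b) {N : ℕ} (h : N + a + b = a * b) :
    repCount ![a, b] N = 0 := by
  rw [repCount_pair, Nat.card_eq_zero]
  exact Or.inl ⟨fun ⟨(x, y), hxy⟩ => cop.not_exists_mul_add_mul_eq h ⟨x, y, hxy⟩⟩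

theorem repCount_pair_le_one (cop : Coprime a b) {N : ℕ} (h : N < a * b) :
    repCount ![a, b] N ≤ 1 := by
  have lt_b {x y : ℕ} (hxy : a * x + b * y = N) : x < b :=
    Nat.lt_of_mul_lt_mul_left (a := a) (by omega)
  have : Subsingleton {p : ℕ × ℕ // a * p.1 + b * p.2 = N} :=
    ⟨fun ⟨(x, y), hxy⟩ ⟨(x', y'), hxy'⟩ => by
      obtain ⟨rfl, rfl⟩ := cop.eq_of_mul_add_mul_eq (lt_b hxy) (lt_b hxy') (hxy.trans hxy'.symm)
      rfl⟩
  rw [repCount_pair]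
  exact Finite.card_le_one_iff_subsingleton.2 this

theorem repCount_pair_add_mul (cop : Coprime a b) (ha : 0 < a) (hb : 0 < b) (N : ℕ) :
    repCount ![a, b] (N + a * b) = repCount ![a, b] N + 1 := by
  let Reps (M : ℕ) := {p : ℕ × ℕ // a * p.1 + b * p.2 = M}
  have := finite_pair_reps ha hb (N + a * b)
  have shift : {p : Reps (N + a * b) // b ≤ p.1.1} ≃ Reps N :=
    { toFun := fun p => ⟨(p.1.1.1 - b, p.1.1.2), by
        have := Nat.mul_le_mul_left a p.2
        have := p.1.2
        show a * (p.1.1.1 - b) + b * p.1.1.2 = N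
        rw [Nat.mul_sub]
        omega⟩
      invFun := fun p => ⟨⟨(p.1.1 + b, p.1.2), by
        have := p.2
        show a * (p.1.1 + b) + b * p.1.2 = N + a * b
        rw [Nat.mul_add]
        omega⟩, Nat.le_add_left _ _⟩
      left_inv := fun p => by
        ext
        · exact Nat.sub_add_cancel p.2
        · rfl
      right_inv := fun p => by ext <;> simp }
  have unique_small : Nat.card {p : Reps (N + a * b) // ¬ b ≤ p.1.1} = 1 := by
    obtain ⟨x₀, y₀, hx₀, hxy₀⟩ := cop.exists_mul_add_mul_eq_of_lt hb (N := N + a * b) (by omega)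
    rw [Nat.card_eq_one_iff_unique]
    refine ⟨⟨?_⟩, ⟨⟨⟨(x₀, y₀), hxy₀⟩, not_le.2 hx₀⟩⟩⟩
    rintro ⟨⟨⟨x, y⟩, h⟩, hx⟩ ⟨⟨⟨x', y'⟩, h'⟩, hx'⟩
    obtain ⟨rfl, rfl⟩ := cop.eq_of_mul_add_mul_eq (not_le.1 hx) (not_le.1 hx') (h.trans h'.symm)
    rfl
  rw [repCount_pair, repCount_pair,
    ← Nat.card_congr (Equiv.sumCompl fun p : Reps (N + a * b) => b ≤ p.1.1), Nat.card_sum,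
    Nat.card_congr shift, unique_small]

theorem repCount_pair_mul_add (cop : Coprime a b) (ha : 0 < a) (hb : 0 < b) (q N : ℕ) :
    repCount ![a, b] (q * (a * b) + N) = q + repCount ![a, b] N := by
  induction q with
  | zero => simp
  | succ q ih =>
    rw [add_one_mul, add_right_comm, repCount_pair_add_mul cop ha hb, ih, add_right_comm]

theorem lt_repCount_pair (cop : Coprime a b) (ha : 0 < a) (hb : 0 < b) {j M : ℕ}
    (h : (j + 1) * (a * b) < M + a + b) : j < repCount ![a, b] M := by
  have hab : a + b ≤ a * b + 1 := by nlinarith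
  rw [add_one_mul] at h
  obtain ⟨N, rfl⟩ := Nat.exists_eq_add_of_le (show j * (a * b) ≤ M by omega)
  have := repCount_pair_pos cop ha hb (N := N) (by omega)
  rw [repCount_pair_mul_add cop ha hb]
  omega

theorem repCount_pair_le (cop : Coprime a b) (ha : 0 < a) (hb : 0 < b) {j N : ℕ}
    (h : N + a + b = (j + 1) * (a * b)) : repCount ![a, b] N ≤ j := by
  induction j generalizing N with
  | zero => rw [repCount_pair_eq_zero cop (by simpa using h)]
  | succ j ih =>
    rcases lt_or_ge N (a * b) with hN | hN
    · exact (repCount_pair_le_one cop hN).trans (by omega)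
    · obtain ⟨N, rfl⟩ := Nat.exists_eq_add_of_le' hN
      rw [add_one_mul] at h
      rw [repCount_pair_add_mul cop ha hb]
      exact Nat.succ_le_succ (ih (by omega))

theorem repCount_pair_eq (cop : Coprime a b) (ha : 0 < a) (hb : 0 < b) {j N : ℕ}
    (h : N + a + b = (j + 1) * (a * b)) : repCount ![a, b] N = j := by
  refine le_antisymm (repCount_pair_le cop ha hb h) ?_
  rcases j with _ | j
  · exact Nat.zero_le _
  · exact lt_repCount_pair cop ha hb
      (h ▸ Nat.mul_lt_mul_of_pos_right (Nat.lt_succ_self _) (Nat.mul_pos ha hb))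

end TwoGenerators

section Triple

variable {a b m : ℕ}

theorem triple_eq_snoc (a b c : ℕ) : ![a, b, c] = (Fin.snoc ![a, b] c : Fin 3 → ℕ) := by
  simp

theorem repCount_pair_le_repCount_triple (ha : 0 < a) (hb : 0 < b) {c : ℕ} (hc : 0 < c)
    (M : ℕ) : repCount ![a, b] M ≤ repCount ![a, b, c] M := by
  rw [triple_eq_snoc]
  exact repCount_le_repCount_snoc (Fin.forall_fin_two.2 ⟨ha, hb⟩) hc M

theorem repCount_triple_eq (cop : Nat.Coprime a b) (ha : 0 < a) (hb : 0 < b) (hm : 0 < m)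
    {j N : ℕ} (hj : j ≤ m) (hN : N + a + b = (j + 1) * (a * b)) :
    repCount ![a, b, m * a * b] N = j := by
  have hc : 0 < m * a * b := by positivity
  rw [triple_eq_snoc, repCount_snoc (Fin.forall_fin_two.2 ⟨ha, hb⟩) hc,
    sum_eq_single 0 ?_ (by simp)]
  · simpa using repCount_pair_eq cop ha hb hN
  intro z hz hz0
  have hcz : z * (m * a * b) ≤ N :=
    (Nat.le_div_iff_mul_le hc).1 (Nat.lt_succ_iff.1 (mem_range.1 hz))
  have hjz : j ≤ m * z := hj.trans (Nat.le_mul_of_pos_right m (Nat.pos_of_ne_zero hz0))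
  rw [show z * (m * a * b) = m * z * (a * b) by ring] at hcz
  rw [show m * a * b * z = m * z * (a * b) by ring]
  rw [add_one_mul] at hN
  rcases hjz.eq_or_lt with hjz | hjz
  · rw [← hjz] at hcz ⊢
    exact repCount_pair_eq_zero cop (by omega)
  · have := Nat.mul_le_mul_right (a * b) (show j + 1 ≤ m * z from hjz)
    rw [add_one_mul] at this
    omega

end Triple

/-- First part of the Corollary: for `j < m + 1`, if `g_j(a₁, a₂, m·a₁·a₂) ≠ 0` then
`g_j(a₁, a₂, m·a₁·a₂) = (j+1)·a₁·a₂ − a₁ − a₂`. -/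
theorem gFrob_of_triple (a1 a2 : ℕ) (ha1 : 0 < a1) (ha2 : 0 < a2)
    (hcop : Nat.Coprime a1 a2) (m : ℕ) (hm : 0 < m) (j : ℕ) (hj : j < m + 1)
    (hne : gFrob ![a1, a2, m * a1 * a2] j ≠ 0) :
    (gFrob ![a1, a2, m * a1 * a2] j : ℤ) = (j + 1) * a1 * a2 - a1 - a2 := by
  set S := {M | repCount ![a1, a2, m * a1 * a2] M = j}
  have bound : ∀ M ∈ S, M + a1 + a2 ≤ (j + 1) * (a1 * a2) := fun M hM => by
    by_contra h
    have := (lt_repCount_pair hcop ha1 ha2 (not_le.1 h)).trans_le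
      (repCount_pair_le_repCount_triple ha1 ha2 (c := m * a1 * a2) (by positivity) M)
    exact this.ne' hM
  obtain ⟨M, hM⟩ : S.Nonempty :=
    Set.nonempty_iff_ne_empty.2 fun h => hne ((congrArg sSup h).trans csSup_empty)
  obtain ⟨G, hG⟩ : ∃ G, G + a1 + a2 = (j + 1) * (a1 * a2) :=
    ⟨(j + 1) * (a1 * a2) - a1 - a2, by have := bound M hM; omega⟩
  have hGreatest : IsGreatest S G :=
    ⟨repCount_triple_eq hcop ha1 ha2 hm (by omega) hG, fun M hM => by have := bound M hM; omega⟩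
  rw [gFrob, hGreatest.csSup_eq]
  have := congrArg (Nat.cast : ℕ → ℤ) hG
  push_cast at this
  linarith
end

section
/- Let m be a positive integer. Then no nonnegative integer has exactly m + 1 representations by the triple (1, 1, m); that is, there is no nonnegative integer n for which the number of triples (x_1, x_2, x_3) of nonnegative integers with x_1 + x_2 + m·x_3 = n equals m + 1. -/
/-!
The representations with `x₃ = 0` are the `n + 1` pairs `x₁ + x₂ = n`. If `n < m` there are no
others, so `n` has `n + 1 ≤ m` representations; if `m ≤ n` there is also `(n - m, 0, 1)`, so `n`
has at least `n + 2 ≥ m + 2` of them.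
-/

open Finset Function

abbrev TripleRep (m n : ℕ) : Type := {x : ℕ × ℕ × ℕ // x.1 + x.2.1 + m * x.2.2 = n}

namespace TripleRep

variable {m n : ℕ}

def ofAntidiagonal (m : ℕ) (p : antidiagonal n) : TripleRep m n :=
  ⟨(p.1.1, p.1.2, 0), by simpa using mem_antidiagonal.1 p.2⟩

lemma ofAntidiagonal_injective : Injective (ofAntidiagonal (n := n) m) := by
  rintro ⟨⟨a, b⟩, _⟩ ⟨⟨c, d⟩, _⟩ h
  simp_all [ofAntidiagonal]

lemma ofAntidiagonal_surjective (h : n < m) : Surjective (ofAntidiagonal (n := n) m) := by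
  rintro ⟨⟨a, b, c⟩, hx : a + b + m * c = n⟩
  have hc : c = 0 := by
    by_contra hc
    have : m ≤ m * c := Nat.le_mul_of_pos_right m (Nat.pos_of_ne_zero hc)
    omega
  subst hc
  exact ⟨⟨(a, b), by simpa using hx⟩, rfl⟩

lemma finite (hm : 0 < m) : Finite (TripleRep m n) := by
  refine Set.Finite.to_subtype ((Set.finite_Iic (n, n, n)).subset fun x (hx : _ = n) ↦ ?_)
  have : x.2.2 ≤ m * x.2.2 := Nat.le_mul_of_pos_left _ hm
  simp only [Set.mem_Iic, Prod.le_def]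
  omega

lemma card_of_lt (h : n < m) : Nat.card (TripleRep m n) = n + 1 := by
  rw [← Nat.card_eq_of_bijective _ ⟨ofAntidiagonal_injective, ofAntidiagonal_surjective h⟩,
    Nat.card_eq_fintype_card, Fintype.card_coe, Nat.card_antidiagonal]

lemma add_two_le_card (hm : 0 < m) (h : m ≤ n) : n + 2 ≤ Nat.card (TripleRep m n) := by
  have := finite (n := n) hm
  let _ := Fintype.ofFinite (TripleRep m n)
  let y : TripleRep m n := ⟨(n - m, 0, 1), by dsimp only; omega⟩
  have hy : y ∉ Set.range (ofAntidiagonal m) := fun ⟨_, hp⟩ ↦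
    zero_ne_one (congrArg (fun x : TripleRep m n ↦ x.1.2.2) hp)
  have hlt := Fintype.card_lt_of_injective_of_notMem _ ofAntidiagonal_injective hy
  rw [Fintype.card_coe, Nat.card_antidiagonal] at hlt
  rw [Nat.card_eq_fintype_card]
  omega

end TripleRep

/-- No nonnegative integer has exactly `m + 1` representations by `(1, 1, m)`. -/
theorem no_rep_count_eq_succ (m : ℕ) (hm : 0 < m) :
    ¬ ∃ n : ℕ, Nat.card {x : ℕ × ℕ × ℕ // x.1 + x.2.1 + m * x.2.2 = n} = m + 1 := by
  rintro ⟨n, hn : Nat.card (TripleRep m n) = m + 1⟩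
  rcases lt_or_ge n m with h | h
  · have := TripleRep.card_of_lt h
    omega
  · have := TripleRep.add_two_le_card hm h
    omega
end
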